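/- Fix p > 1. With g(θ) = θ·J_p(θ)/I_p(θ) as above, one has g(θ) → 0 as θ → 0⁺ and g(θ) → +∞ as θ → +∞. Consequently, for every β ∈ (0,1) there is a unique θ > 0 with θ·J_p(θ)/I_p(θ) = (1−β)p / (2(p−1)β). -/

import Mathlib

open MeasureTheory Real Filter Set

lemma auxI {a q b : ℝ} (ha : -1 < a) (hq : 0 < q) (hb : 0 < b) :
    IntegrableOn (fun x : ℝ => x ^ a * Real.exp (-(b * x ^ q))) (Set.Ioi 0) := by
  have h0 : q ≠ 0 := hq.ne'
  have hs : 0 < (a+1)/q := div_pos (by linarith) hq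
  have hg : IntegrableOn (fun y : ℝ => y ^ ((a+1)/q - 1) * Real.exp (-(b * y))) (Set.Ioi 0) := by
    have base := Real.GammaIntegral_convergent hs
    have h1 := (integrableOn_Ioi_comp_mul_left_iff
      (fun y : ℝ => Real.exp (-y) * y ^ ((a+1)/q - 1)) 0 hb).mpr (by simpa using base)
    have h2 : IntegrableOn (fun x : ℝ => b ^ (1 - (a+1)/q) * (Real.exp (-(b * x)) * (b * x) ^ ((a+1)/q - 1))) (Set.Ioi 0) := h1.const_mul _
    refine h2.congr_fun (fun x hx => ?_) measurableSet_Ioi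
    have hx0 : (0:ℝ) < x := hx
    beta_reduce
    rw [mul_rpow hb.le hx0.le]
    have hbb : b ^ (1 - (a+1)/q) * b ^ ((a+1)/q - 1) = 1 := by
      rw [← Real.rpow_add hb]; norm_num
    calc b ^ (1 - (a+1)/q) * (Real.exp (-(b*x)) * (b ^ ((a+1)/q-1) * x ^ ((a+1)/q-1)))
        = (b ^ (1 - (a+1)/q) * b ^ ((a+1)/q - 1)) * (x ^ ((a+1)/q-1) * Real.exp (-(b*x))) := by
          ring
      _ = x ^ ((a+1)/q-1) * Real.exp (-(b*x)) := by rw [hbb, one_mul]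
  have key := (integrableOn_Ioi_comp_rpow_iff'
      (fun y : ℝ => y ^ ((a+1)/q - 1) * Real.exp (-(b * y))) h0).mpr hg
  refine key.congr_fun (fun x hx => ?_) measurableSet_Ioi
  have hx0 : (0:ℝ) < x := hx
  have h3 : (x ^ q) ^ ((a+1)/q - 1) = x ^ (a + 1 - q) := by
    rw [← Real.rpow_mul hx0.le]
    congr 1
    field_simp
  beta_reduce
  rw [smul_eq_mul, h3, ← mul_assoc, ← Real.rpow_add hx0]
  congr 2
  ring

lemma int_comp_abs {f : ℝ → ℝ} (hf : IntegrableOn f (Set.Ioi 0)) :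
    Integrable (fun x : ℝ => f |x|) := by
  have hIoi : IntegrableOn (fun x : ℝ => f |x|) (Set.Ioi 0) :=
    hf.congr_fun (fun x hx => by rw [abs_of_pos hx]) measurableSet_Ioi
  have hIic : IntegrableOn (fun x : ℝ => f |x|) (Set.Iic 0) := by
    rw [← Measure.map_neg_eq_self (volume : Measure ℝ)]
    have m : MeasurableEmbedding fun x : ℝ => -x :=
      (Homeomorph.neg ℝ).measurableEmbedding
    rw [m.integrableOn_map_iff]
    simp_rw [Function.comp_def, abs_neg, neg_preimage, neg_Iic, neg_zero]
    exact Iff.mpr integrableOn_Ici_iff_integrableOn_Ioi hIoi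
  have := hIic.union hIoi
  rwa [Set.Iic_union_Ioi, integrableOn_univ] at this

lemma Phi_meas (p a c d : ℝ) :
    Measurable (fun x : ℝ => |x| ^ a * Real.exp (-(c * |x| ^ p) - d * |x| ^ (2*p-2))) := by
  fun_prop

lemma Phi_int {p a c d : ℝ} (hp : 1 < p) (ha : -1 < a) (hc : 0 ≤ c) (hd : 0 ≤ d)
    (hcd : 0 < c ∨ 0 < d) :
    Integrable (fun x : ℝ => |x| ^ a * Real.exp (-(c * |x| ^ p) - d * |x| ^ (2*p-2))) := by
  have hq : 0 < 2*p-2 := by linarith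
  have hmeas : AEStronglyMeasurable
      (fun t : ℝ => t ^ a * Real.exp (-(c * t ^ p) - d * t ^ (2*p-2)))
      (volume.restrict (Set.Ioi 0)) := by
    apply Measurable.aestronglyMeasurable; fun_prop
  have key : IntegrableOn (fun t : ℝ => t ^ a * Real.exp (-(c * t ^ p) - d * t ^ (2*p-2)))
      (Set.Ioi 0) := by
    rcases hcd with hc' | hd'
    · refine Integrable.mono (auxI ha (by linarith : (0:ℝ) < p) hc') hmeas ?_
      filter_upwards [ae_restrict_mem measurableSet_Ioi] with t ht
      have ht0 : (0:ℝ) < t := ht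
      rw [norm_mul, norm_of_nonneg (rpow_nonneg ht0.le a), norm_of_nonneg (exp_nonneg _),
        norm_of_nonneg (by positivity : (0:ℝ) ≤ t ^ a * Real.exp (-(c * t ^ p)))]
      have : Real.exp (-(c * t ^ p) - d * t ^ (2*p-2)) ≤ Real.exp (-(c * t ^ p)) := by
        apply Real.exp_le_exp.mpr; nlinarith [rpow_nonneg ht0.le (2*p-2)]
      exact mul_le_mul_of_nonneg_left this (rpow_nonneg ht0.le a)
    · refine Integrable.mono (auxI ha hq hd') hmeas ?_
      filter_upwards [ae_restrict_mem measurableSet_Ioi] with t ht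
      have ht0 : (0:ℝ) < t := ht
      rw [norm_mul, norm_of_nonneg (rpow_nonneg ht0.le a), norm_of_nonneg (exp_nonneg _),
        norm_of_nonneg (by positivity : (0:ℝ) ≤ t ^ a * Real.exp (-(d * t ^ (2*p-2))))]
      have : Real.exp (-(c * t ^ p) - d * t ^ (2*p-2)) ≤ Real.exp (-(d * t ^ (2*p-2))) := by
        apply Real.exp_le_exp.mpr; nlinarith [rpow_nonneg ht0.le p]
      exact mul_le_mul_of_nonneg_left this (rpow_nonneg ht0.le a)
  exact int_comp_abs key

lemma Phi_nonneg (p a c d : ℝ) (x : ℝ) :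
    0 ≤ |x| ^ a * Real.exp (-(c * |x| ^ p) - d * |x| ^ (2*p-2)) := by positivity

lemma Phi_pos {p a c d : ℝ} (hp : 1 < p) (ha : -1 < a) (hc : 0 ≤ c) (hd : 0 ≤ d)
    (hcd : 0 < c ∨ 0 < d) :
    0 < ∫ x : ℝ, |x| ^ a * Real.exp (-(c * |x| ^ p) - d * |x| ^ (2*p-2)) := by
  rw [integral_pos_iff_support_of_nonneg (Phi_nonneg p a c d) (Phi_int hp ha hc hd hcd)]
  have hsub : Set.Ioi (0:ℝ) ⊆ Function.support
      (fun x : ℝ => |x| ^ a * Real.exp (-(c * |x| ^ p) - d * |x| ^ (2*p-2))) := by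
    intro x hx
    have hx0 : (0:ℝ) < x := hx
    have : (0:ℝ) < |x| ^ a * Real.exp (-(c * |x| ^ p) - d * |x| ^ (2*p-2)) := by
      have : (0:ℝ) < |x| := abs_pos.mpr hx0.ne'
      positivity
    exact this.ne'
  calc (0:ENNReal) < volume (Set.Ioi (0:ℝ)) := by simp [Real.volume_Ioi]
    _ ≤ _ := measure_mono hsub

lemma Phi_mono {p a c d c' d' : ℝ} (hp : 1 < p) (ha : -1 < a) (hc : 0 ≤ c) (hd : 0 ≤ d)
    (hcd : 0 < c ∨ 0 < d) (hcc : c ≤ c') (hdd : d ≤ d') :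
    ∫ x : ℝ, |x| ^ a * Real.exp (-(c' * |x| ^ p) - d' * |x| ^ (2*p-2)) ≤
      ∫ x : ℝ, |x| ^ a * Real.exp (-(c * |x| ^ p) - d * |x| ^ (2*p-2)) := by
  have hcd' : 0 < c' ∨ 0 < d' := by
    rcases hcd with h | h
    · exact Or.inl (lt_of_lt_of_le h hcc)
    · exact Or.inr (lt_of_lt_of_le h hdd)
  refine integral_mono (Phi_int hp ha (hc.trans hcc) (hd.trans hdd) hcd') (Phi_int hp ha hc hd hcd)
    (fun x => ?_)
  apply mul_le_mul_of_nonneg_left _ (rpow_nonneg (abs_nonneg x) a)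
  apply Real.exp_le_exp.mpr
  have h1 : (0:ℝ) ≤ |x| ^ p := rpow_nonneg (abs_nonneg x) p
  have h2 : (0:ℝ) ≤ |x| ^ (2*p-2) := rpow_nonneg (abs_nonneg x) (2*p-2)
  nlinarith

lemma ae_ne_zero : ∀ᵐ x : ℝ, x ≠ 0 := by
  rw [ae_iff]
  simpa using Real.volume_singleton

lemma cheb {ρ u φ : ℝ → ℝ} (hρ : ∀ x, 0 ≤ ρ x)
    (hmono : ∀ x y, x ≠ 0 → y ≠ 0 → 0 ≤ (u x - u y) * (φ x - φ y))
    (h1 : Integrable ρ) (h2 : Integrable (fun x => u x * ρ x))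
    (h3 : Integrable (fun x => φ x * ρ x)) (h4 : Integrable (fun x => u x * φ x * ρ x)) :
    (∫ x, u x * ρ x) * (∫ x, φ x * ρ x) ≤ (∫ x, u x * φ x * ρ x) * (∫ x, ρ x) := by
  set A := ∫ x, ρ x with hA
  set B := ∫ x, φ x * ρ x with hB
  set C := ∫ x, u x * ρ x with hC
  set D := ∫ x, u x * φ x * ρ x with hD
  have expand : ∀ x : ℝ, (∫ y, (u x - u y) * (φ x - φ y) * (ρ x * ρ y)) =
      (u x * φ x * ρ x) * A - (u x * ρ x) * B - ((φ x * ρ x) * C - ρ x * D) := by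
    intro x
    have heq : (fun y => (u x - u y) * (φ x - φ y) * (ρ x * ρ y))
        = fun y => ((u x * φ x * ρ x) * ρ y - (u x * ρ x) * (φ y * ρ y))
          - ((φ x * ρ x) * (u y * ρ y) - ρ x * (u y * φ y * ρ y)) := by
      funext y; ring
    have i1 : Integrable (fun y : ℝ => (u x * φ x * ρ x) * ρ y - (u x * ρ x) * (φ y * ρ y)) volume :=
      (h1.const_mul _).sub (h3.const_mul _)
    have i2 : Integrable (fun y : ℝ => (φ x * ρ x) * (u y * ρ y) - ρ x * (u y * φ y * ρ y)) volume :=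
      (h2.const_mul _).sub (h4.const_mul _)
    rw [heq, integral_sub i1 i2,
      integral_sub (h1.const_mul _) (h3.const_mul _),
      integral_sub (h2.const_mul _) (h4.const_mul _),
      integral_const_mul, integral_const_mul, integral_const_mul, integral_const_mul]
  have hGnn : ∀ᵐ x : ℝ, 0 ≤ (u x * φ x * ρ x) * A - (u x * ρ x) * B
      - ((φ x * ρ x) * C - ρ x * D) := by
    filter_upwards [ae_ne_zero] with x hx
    rw [← expand x]
    apply integral_nonneg_of_ae
    filter_upwards [ae_ne_zero] with y hy
    exact mul_nonneg (hmono x y hx hy) (mul_nonneg (hρ x) (hρ y))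
  have hint : (∫ x, (u x * φ x * ρ x) * A - (u x * ρ x) * B
      - ((φ x * ρ x) * C - ρ x * D)) = D * A - C * B - (B * C - A * D) := by
    have i1 : Integrable (fun x : ℝ => (u x * φ x * ρ x) * A - (u x * ρ x) * B) volume :=
      (h4.mul_const _).sub (h2.mul_const _)
    have i2 : Integrable (fun x : ℝ => (φ x * ρ x) * C - ρ x * D) volume :=
      (h3.mul_const _).sub (h1.mul_const _)
    rw [integral_sub i1 i2,
      integral_sub (h4.mul_const _) (h2.mul_const _),
      integral_sub (h3.mul_const _) (h1.mul_const _),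
      integral_mul_const, integral_mul_const, integral_mul_const, integral_mul_const]
  have := integral_nonneg_of_ae hGnn
  rw [hint] at this
  nlinarith [this]

noncomputable def II (p θ : ℝ) : ℝ := ∫ x : ℝ, Real.exp (-|x| ^ p - θ * |x| ^ (2 * p - 2))
noncomputable def JJ (p θ : ℝ) : ℝ :=
  ∫ x : ℝ, |x| ^ (p - 2) * Real.exp (-|x| ^ p - θ * |x| ^ (2 * p - 2))
noncomputable def AA (p ε : ℝ) : ℝ := ∫ y : ℝ, Real.exp (-(ε * |y| ^ p) - |y| ^ (2 * p - 2))
noncomputable def BB (p ε : ℝ) : ℝ :=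
  ∫ y : ℝ, |y| ^ (p - 2) * Real.exp (-(ε * |y| ^ p) - |y| ^ (2 * p - 2))

lemma II_eq (p θ : ℝ) :
    II p θ = ∫ x : ℝ, |x| ^ (0:ℝ) * Real.exp (-(1 * |x| ^ p) - θ * |x| ^ (2*p-2)) := by
  simp [II]

lemma JJ_eq (p θ : ℝ) :
    JJ p θ = ∫ x : ℝ, |x| ^ (p-2) * Real.exp (-(1 * |x| ^ p) - θ * |x| ^ (2*p-2)) := by
  simp [JJ]

lemma AA_eq (p ε : ℝ) :
    AA p ε = ∫ y : ℝ, |y| ^ (0:ℝ) * Real.exp (-(ε * |y| ^ p) - 1 * |y| ^ (2*p-2)) := by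
  simp [AA]

lemma BB_eq (p ε : ℝ) :
    BB p ε = ∫ y : ℝ, |y| ^ (p-2) * Real.exp (-(ε * |y| ^ p) - 1 * |y| ^ (2*p-2)) := by
  simp [BB]

section basics
variable {p θ ε : ℝ} (hp : 1 < p)
include hp

lemma hpa : (-1:ℝ) < p - 2 := by linarith

lemma II_pos (hθ : 0 ≤ θ) : 0 < II p θ := by
  rw [II_eq]; exact Phi_pos hp (by norm_num) zero_le_one hθ (Or.inl one_pos)

lemma JJ_pos (hθ : 0 ≤ θ) : 0 < JJ p θ := by
  rw [JJ_eq]; exact Phi_pos hp (hpa hp) zero_le_one hθ (Or.inl one_pos)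

lemma AA_pos (hε : 0 ≤ ε) : 0 < AA p ε := by
  rw [AA_eq]; exact Phi_pos hp (by norm_num) hε zero_le_one (Or.inr one_pos)

lemma BB_pos (hε : 0 ≤ ε) : 0 < BB p ε := by
  rw [BB_eq]; exact Phi_pos hp (hpa hp) hε zero_le_one (Or.inr one_pos)

lemma JJ_le (hθ : 0 ≤ θ) {θ' : ℝ} (hθ' : θ ≤ θ') : JJ p θ' ≤ JJ p θ := by
  rw [JJ_eq, JJ_eq]
  exact Phi_mono hp (hpa hp) zero_le_one hθ (Or.inl one_pos) le_rfl hθ'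

lemma II_le (hθ : 0 ≤ θ) {θ' : ℝ} (hθ' : θ ≤ θ') : II p θ' ≤ II p θ := by
  rw [II_eq, II_eq]
  exact Phi_mono hp (by norm_num) zero_le_one hθ (Or.inl one_pos) le_rfl hθ'

end basics

section scaling
variable {p θ : ℝ}

lemma abs_scale (hθ : 0 < θ) (x : ℝ) (e : ℝ) :
    |θ ^ (-(1/(2*p-2))) * x| ^ e = (θ ^ (-(1/(2*p-2)))) ^ e * |x| ^ e := by
  have hr : 0 < θ ^ (-(1/(2*p-2))) := rpow_pos_of_pos hθ _
  rw [abs_mul, abs_of_pos hr, mul_rpow hr.le (abs_nonneg x)]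

lemma r_pow_q (hp : 1 < p) (hθ : 0 < θ) :
    θ * (θ ^ (-(1/(2*p-2)))) ^ (2*p-2) = 1 := by
  rw [← Real.rpow_mul hθ.le]
  have hne : (2*p-2) ≠ 0 := by nlinarith
  have h : -(1/(2*p-2)) * (2*p-2) = -1 := by
    rw [neg_mul, div_mul_cancel₀ 1 hne]
  rw [h, Real.rpow_neg_one, mul_inv_cancel₀ hθ.ne']

lemma r_pow_p (hp : 1 < p) (hθ : 0 < θ) :
    (θ ^ (-(1/(2*p-2)))) ^ p = θ ^ (-(p/(2*p-2))) := by
  rw [← Real.rpow_mul hθ.le]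
  congr 1
  ring

lemma II_scale (hp : 1 < p) (hθ : 0 < θ) :
    II p θ = θ ^ (-(1/(2*p-2))) * AA p (θ ^ (-(p/(2*p-2)))) := by
  set r := θ ^ (-(1/(2*p-2))) with hrdef
  have hr : 0 < r := rpow_pos_of_pos hθ _
  have key := MeasureTheory.Measure.integral_comp_mul_left
    (fun x : ℝ => Real.exp (-|x| ^ p - θ * |x| ^ (2*p-2))) r
  have hL : (fun x : ℝ => Real.exp (-|r*x| ^ p - θ * |r*x| ^ (2*p-2)))
      = fun x : ℝ => Real.exp (-(θ ^ (-(p/(2*p-2))) * |x| ^ p) - |x| ^ (2*p-2)) := by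
    funext x
    rw [abs_scale hθ, abs_scale hθ, r_pow_p hp hθ]
    have h2 : θ * ((r ^ (2*p-2)) * |x| ^ (2*p-2)) = |x| ^ (2*p-2) := by
      rw [← mul_assoc, r_pow_q hp hθ, one_mul]
    congr 1
    linear_combination -h2
  simp only [hL] at key
  rw [smul_eq_mul, abs_of_pos (inv_pos.mpr hr)] at key
  have hAA : AA p (θ ^ (-(p/(2*p-2)))) = r⁻¹ * II p θ := by
    rw [AA, II, ← key]
  rw [hAA, ← mul_assoc, mul_inv_cancel₀ hr.ne', one_mul]

lemma JJ_scale (hp : 1 < p) (hθ : 0 < θ) :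
    JJ p θ = (θ ^ (-(1/(2*p-2)))) ^ (p-1) * BB p (θ ^ (-(p/(2*p-2)))) := by
  set r := θ ^ (-(1/(2*p-2))) with hrdef
  have hr : 0 < r := rpow_pos_of_pos hθ _
  have hne2 : r ^ (p-2) ≠ 0 := (rpow_pos_of_pos hr _).ne'
  have key := MeasureTheory.Measure.integral_comp_mul_left
    (fun x : ℝ => |x| ^ (p-2) * Real.exp (-|x| ^ p - θ * |x| ^ (2*p-2))) r
  have hL : (fun x : ℝ => |r*x| ^ (p-2) * Real.exp (-|r*x| ^ p - θ * |r*x| ^ (2*p-2)))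
      = fun x : ℝ => r ^ (p-2) *
        (|x| ^ (p-2) * Real.exp (-(θ ^ (-(p/(2*p-2))) * |x| ^ p) - |x| ^ (2*p-2))) := by
    funext x
    rw [abs_scale hθ, abs_scale hθ, abs_scale hθ, r_pow_p hp hθ]
    have h2 : θ * ((r ^ (2*p-2)) * |x| ^ (2*p-2)) = |x| ^ (2*p-2) := by
      rw [← mul_assoc, r_pow_q hp hθ, one_mul]
    have h3 : -(θ ^ (-(p/(2*p-2))) * |x| ^ p) - θ * (r ^ (2*p-2) * |x| ^ (2*p-2))
        = -(θ ^ (-(p/(2*p-2))) * |x| ^ p) - |x| ^ (2*p-2) := by linear_combination -h2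
    rw [h3]
    ring
  simp only [hL] at key
  rw [integral_const_mul, smul_eq_mul, abs_of_pos (inv_pos.mpr hr)] at key
  have hBB : BB p (θ ^ (-(p/(2*p-2)))) = (r ^ (p-2))⁻¹ * (r⁻¹ * JJ p θ) := by
    rw [BB, JJ, ← key, inv_mul_cancel_left₀ hne2]
  rw [hBB]
  have hrp : r ^ (p-1) = r ^ (p-2) * r := by
    have e1 : (p-1) = (p-2) + 1 := by ring
    rw [e1, Real.rpow_add hr, Real.rpow_one]
  rw [hrp]
  field_simp

end scaling

section continuity
variable {p a θ0 : ℝ}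

lemma Phi_cont (hp : 1 < p) (ha : -1 < a) (h0 : 0 < θ0) :
    ContinuousAt (fun θ => ∫ x : ℝ, |x| ^ a * Real.exp (-(1 * |x| ^ p) - θ * |x| ^ (2*p-2))) θ0 := by
  apply MeasureTheory.continuousAt_of_dominated
    (bound := fun x : ℝ => |x| ^ a * Real.exp (-(1 * |x| ^ p) - (θ0/2) * |x| ^ (2*p-2)))
  · exact Eventually.of_forall fun θ => (Phi_meas p a 1 θ).aestronglyMeasurable
  · filter_upwards [Ioi_mem_nhds (half_lt_self h0)] with θ hθ
    apply Eventually.of_forall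
    intro x
    have h1 : (0:ℝ) ≤ |x| ^ a := rpow_nonneg (abs_nonneg x) a
    have h2 : (0:ℝ) ≤ |x| ^ (2*p-2) := rpow_nonneg (abs_nonneg x) (2*p-2)
    rw [norm_mul, norm_of_nonneg h1, norm_of_nonneg (exp_nonneg _)]
    apply mul_le_mul_of_nonneg_left _ h1
    apply Real.exp_le_exp.mpr
    have : θ0/2 ≤ θ := le_of_lt hθ
    nlinarith
  · exact Phi_int hp ha zero_le_one (by linarith) (Or.inl one_pos)
  · apply Eventually.of_forall
    intro x
    apply Continuous.continuousAt
    fun_prop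

lemma II_cont (hp : 1 < p) (h0 : 0 < θ0) : ContinuousAt (fun θ => II p θ) θ0 := by
  have he : (fun θ => II p θ)
      = fun θ => ∫ x : ℝ, |x| ^ (0:ℝ) * Real.exp (-(1 * |x| ^ p) - θ * |x| ^ (2*p-2)) :=
    funext (II_eq p)
  rw [he]
  exact Phi_cont hp (by norm_num) h0

lemma JJ_cont (hp : 1 < p) (h0 : 0 < θ0) : ContinuousAt (fun θ => JJ p θ) θ0 := by
  have he : (fun θ => JJ p θ)
      = fun θ => ∫ x : ℝ, |x| ^ (p-2) * Real.exp (-(1 * |x| ^ p) - θ * |x| ^ (2*p-2)) :=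
    funext (JJ_eq p)
  rw [he]
  exact Phi_cont hp (by linarith) h0

end continuity

section intbridge
variable {p θ ε : ℝ} (hp : 1 < p)
include hp

lemma II_int (hθ : 0 ≤ θ) :
    Integrable (fun x : ℝ => Real.exp (-|x| ^ p - θ * |x| ^ (2*p-2))) := by
  have h := Phi_int (a := 0) (c := 1) (d := θ) hp (by norm_num) zero_le_one hθ (Or.inl one_pos)
  refine h.congr (Eventually.of_forall fun x => ?_)
  simp

lemma JJ_int (hθ : 0 ≤ θ) :
    Integrable (fun x : ℝ => |x| ^ (p-2) * Real.exp (-|x| ^ p - θ * |x| ^ (2*p-2))) := by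
  have h := Phi_int (a := p-2) (c := 1) (d := θ) hp (by linarith) zero_le_one hθ (Or.inl one_pos)
  refine h.congr (Eventually.of_forall fun x => ?_)
  simp

lemma AA_int (hε : 0 ≤ ε) :
    Integrable (fun y : ℝ => Real.exp (-(ε * |y| ^ p) - |y| ^ (2*p-2))) := by
  have h := Phi_int (a := 0) (c := ε) (d := 1) hp (by norm_num) hε zero_le_one (Or.inr one_pos)
  refine h.congr (Eventually.of_forall fun x => ?_)
  simp

lemma BB_int (hε : 0 ≤ ε) :
    Integrable (fun y : ℝ => |y| ^ (p-2) * Real.exp (-(ε * |y| ^ p) - |y| ^ (2*p-2))) := by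
  have h := Phi_int (a := p-2) (c := ε) (d := 1) hp (by linarith) hε zero_le_one (Or.inr one_pos)
  refine h.congr (Eventually.of_forall fun x => ?_)
  simp

end intbridge

section chebapp
variable {p : ℝ}

lemma JI_mono_ple2 (hp : 1 < p) (hp2 : p ≤ 2) {θ1 θ2 : ℝ} (h1 : 0 < θ1) (h12 : θ1 ≤ θ2) :
    JJ p θ1 * II p θ2 ≤ JJ p θ2 * II p θ1 := by
  have hq : (0:ℝ) < 2*p-2 := by linarith
  have hΔ : (0:ℝ) ≤ θ2 - θ1 := by linarith
  have i3 : Integrable (fun x : ℝ =>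
      Real.exp (-((θ2-θ1) * |x| ^ (2*p-2))) * Real.exp (-|x| ^ p - θ1 * |x| ^ (2*p-2))) := by
    refine (II_int hp (le_trans h1.le h12)).congr (Eventually.of_forall fun x => ?_)
    beta_reduce
    rw [← Real.exp_add]; congr 1; ring
  have i4 : Integrable (fun x : ℝ =>
      |x| ^ (p-2) * Real.exp (-((θ2-θ1) * |x| ^ (2*p-2)))
        * Real.exp (-|x| ^ p - θ1 * |x| ^ (2*p-2))) := by
    refine (JJ_int hp (le_trans h1.le h12)).congr (Eventually.of_forall fun x => ?_)
    beta_reduce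
    rw [mul_assoc, ← Real.exp_add]
    congr 2
    ring
  have key := cheb (ρ := fun x : ℝ => Real.exp (-|x| ^ p - θ1 * |x| ^ (2*p-2)))
    (u := fun x : ℝ => |x| ^ (p-2))
    (φ := fun x : ℝ => Real.exp (-((θ2-θ1) * |x| ^ (2*p-2))))
    (fun x => exp_nonneg _)
    (by
      intro x y hx hy
      beta_reduce
      rcases le_total |x| |y| with hxy | hxy
      · have hux : |y| ^ (p-2) ≤ |x| ^ (p-2) :=
          Real.rpow_le_rpow_of_nonpos (abs_pos.mpr hx) hxy (by linarith)
        have hrq : |x| ^ (2*p-2) ≤ |y| ^ (2*p-2) := Real.rpow_le_rpow (abs_nonneg x) hxy hq.le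
        have hφ : Real.exp (-((θ2-θ1) * |y| ^ (2*p-2)))
            ≤ Real.exp (-((θ2-θ1) * |x| ^ (2*p-2))) := by
          apply Real.exp_le_exp.mpr; nlinarith
        exact mul_nonneg (by linarith) (by linarith)
      · have hux : |x| ^ (p-2) ≤ |y| ^ (p-2) :=
          Real.rpow_le_rpow_of_nonpos (abs_pos.mpr hy) hxy (by linarith)
        have hrq : |y| ^ (2*p-2) ≤ |x| ^ (2*p-2) := Real.rpow_le_rpow (abs_nonneg y) hxy hq.le
        have hφ : Real.exp (-((θ2-θ1) * |x| ^ (2*p-2)))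
            ≤ Real.exp (-((θ2-θ1) * |y| ^ (2*p-2))) := by
          apply Real.exp_le_exp.mpr; nlinarith
        nlinarith)
    (II_int hp h1.le) (JJ_int hp h1.le) i3 i4
  rw [JJ, II, JJ, II]
  have e1 : (∫ x : ℝ, Real.exp (-|x| ^ p - θ2 * |x| ^ (2*p-2)))
      = ∫ x : ℝ, Real.exp (-((θ2-θ1) * |x| ^ (2*p-2)))
        * Real.exp (-|x| ^ p - θ1 * |x| ^ (2*p-2)) := by
    congr 1; funext x; rw [← Real.exp_add]; congr 1; ring
  have e2 : (∫ x : ℝ, |x| ^ (p-2) * Real.exp (-|x| ^ p - θ2 * |x| ^ (2*p-2)))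
      = ∫ x : ℝ, |x| ^ (p-2) * Real.exp (-((θ2-θ1) * |x| ^ (2*p-2)))
        * Real.exp (-|x| ^ p - θ1 * |x| ^ (2*p-2)) := by
    congr 1; funext x; rw [mul_assoc, ← Real.exp_add]; congr 2; ring
  rw [show (2:ℝ)*p-2 = 2*p-2 from rfl] at e1
  rw [e1, e2]
  exact key

lemma BA_mono_ple2 (hp : 1 < p) (hp2 : p ≤ 2) {ε1 ε2 : ℝ} (h1 : 0 ≤ ε1) (h12 : ε1 ≤ ε2) :
    BB p ε1 * AA p ε2 ≤ BB p ε2 * AA p ε1 := by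
  have hq : (0:ℝ) < p := by linarith
  have hΔ : (0:ℝ) ≤ ε2 - ε1 := by linarith
  have i3 : Integrable (fun x : ℝ =>
      Real.exp (-((ε2-ε1) * |x| ^ p)) * Real.exp (-(ε1 * |x| ^ p) - |x| ^ (2*p-2))) := by
    refine (AA_int hp (le_trans h1 h12)).congr (Eventually.of_forall fun x => ?_)
    beta_reduce
    rw [← Real.exp_add]; congr 1; ring
  have i4 : Integrable (fun x : ℝ =>
      |x| ^ (p-2) * Real.exp (-((ε2-ε1) * |x| ^ p))
        * Real.exp (-(ε1 * |x| ^ p) - |x| ^ (2*p-2))) := by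
    refine (BB_int hp (le_trans h1 h12)).congr (Eventually.of_forall fun x => ?_)
    beta_reduce
    rw [mul_assoc, ← Real.exp_add]
    congr 2
    ring
  have key := cheb (ρ := fun x : ℝ => Real.exp (-(ε1 * |x| ^ p) - |x| ^ (2*p-2)))
    (u := fun x : ℝ => |x| ^ (p-2))
    (φ := fun x : ℝ => Real.exp (-((ε2-ε1) * |x| ^ p)))
    (fun x => exp_nonneg _)
    (by
      intro x y hx hy
      beta_reduce
      rcases le_total |x| |y| with hxy | hxy
      · have hux : |y| ^ (p-2) ≤ |x| ^ (p-2) :=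
          Real.rpow_le_rpow_of_nonpos (abs_pos.mpr hx) hxy (by linarith)
        have hrq : |x| ^ p ≤ |y| ^ p := Real.rpow_le_rpow (abs_nonneg x) hxy hq.le
        have hφ : Real.exp (-((ε2-ε1) * |y| ^ p)) ≤ Real.exp (-((ε2-ε1) * |x| ^ p)) := by
          apply Real.exp_le_exp.mpr; nlinarith
        exact mul_nonneg (by linarith) (by linarith)
      · have hux : |x| ^ (p-2) ≤ |y| ^ (p-2) :=
          Real.rpow_le_rpow_of_nonpos (abs_pos.mpr hy) hxy (by linarith)
        have hrq : |y| ^ p ≤ |x| ^ p := Real.rpow_le_rpow (abs_nonneg y) hxy hq.le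
        have hφ : Real.exp (-((ε2-ε1) * |x| ^ p)) ≤ Real.exp (-((ε2-ε1) * |y| ^ p)) := by
          apply Real.exp_le_exp.mpr; nlinarith
        nlinarith)
    (AA_int hp h1) (BB_int hp h1) i3 i4
  rw [BB, AA, BB, AA]
  have e1 : (∫ x : ℝ, Real.exp (-(ε2 * |x| ^ p) - |x| ^ (2*p-2)))
      = ∫ x : ℝ, Real.exp (-((ε2-ε1) * |x| ^ p))
        * Real.exp (-(ε1 * |x| ^ p) - |x| ^ (2*p-2)) := by
    congr 1; funext x; rw [← Real.exp_add]; congr 1; ring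
  have e2 : (∫ x : ℝ, |x| ^ (p-2) * Real.exp (-(ε2 * |x| ^ p) - |x| ^ (2*p-2)))
      = ∫ x : ℝ, |x| ^ (p-2) * Real.exp (-((ε2-ε1) * |x| ^ p))
        * Real.exp (-(ε1 * |x| ^ p) - |x| ^ (2*p-2)) := by
    congr 1; funext x; rw [mul_assoc, ← Real.exp_add]; congr 2; ring
  rw [e1, e2]
  exact key

lemma BA_mono_pge2 (hp : 1 < p) (hp2 : 2 ≤ p) {ε1 ε2 : ℝ} (h1 : 0 ≤ ε1) (h12 : ε1 ≤ ε2) :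
    BB p ε2 * AA p ε1 ≤ BB p ε1 * AA p ε2 := by
  have hq : (0:ℝ) < p := by linarith
  have hΔ : (0:ℝ) ≤ ε2 - ε1 := by linarith
  have i3' : Integrable (fun x : ℝ =>
      Real.exp (-((ε2-ε1) * |x| ^ p)) * Real.exp (-(ε1 * |x| ^ p) - |x| ^ (2*p-2))) := by
    refine (AA_int hp (le_trans h1 h12)).congr (Eventually.of_forall fun x => ?_)
    beta_reduce
    rw [← Real.exp_add]; congr 1; ring
  have i4' : Integrable (fun x : ℝ =>
      |x| ^ (p-2) * Real.exp (-((ε2-ε1) * |x| ^ p))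
        * Real.exp (-(ε1 * |x| ^ p) - |x| ^ (2*p-2))) := by
    refine (BB_int hp (le_trans h1 h12)).congr (Eventually.of_forall fun x => ?_)
    beta_reduce
    rw [mul_assoc, ← Real.exp_add]
    congr 2
    ring
  have i3 : Integrable (fun x : ℝ =>
      -Real.exp (-((ε2-ε1) * |x| ^ p)) * Real.exp (-(ε1 * |x| ^ p) - |x| ^ (2*p-2))) := by
    refine i3'.neg.congr (Eventually.of_forall fun x => ?_)
    simp only [Pi.neg_apply]
    ring
  have i4 : Integrable (fun x : ℝ =>
      |x| ^ (p-2) * -Real.exp (-((ε2-ε1) * |x| ^ p))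
        * Real.exp (-(ε1 * |x| ^ p) - |x| ^ (2*p-2))) := by
    refine i4'.neg.congr (Eventually.of_forall fun x => ?_)
    simp only [Pi.neg_apply]
    ring
  have key := cheb (ρ := fun x : ℝ => Real.exp (-(ε1 * |x| ^ p) - |x| ^ (2*p-2)))
    (u := fun x : ℝ => |x| ^ (p-2))
    (φ := fun x : ℝ => -Real.exp (-((ε2-ε1) * |x| ^ p)))
    (fun x => exp_nonneg _)
    (by
      intro x y hx hy
      beta_reduce
      rcases le_total |x| |y| with hxy | hxy
      · have hux : |x| ^ (p-2) ≤ |y| ^ (p-2) :=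
          Real.rpow_le_rpow (abs_nonneg x) hxy (by linarith)
        have hrq : |x| ^ p ≤ |y| ^ p := Real.rpow_le_rpow (abs_nonneg x) hxy hq.le
        have hφ : Real.exp (-((ε2-ε1) * |y| ^ p)) ≤ Real.exp (-((ε2-ε1) * |x| ^ p)) := by
          apply Real.exp_le_exp.mpr; nlinarith
        nlinarith
      · have hux : |y| ^ (p-2) ≤ |x| ^ (p-2) :=
          Real.rpow_le_rpow (abs_nonneg y) hxy (by linarith)
        have hrq : |y| ^ p ≤ |x| ^ p := Real.rpow_le_rpow (abs_nonneg y) hxy hq.le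
        have hφ : Real.exp (-((ε2-ε1) * |x| ^ p)) ≤ Real.exp (-((ε2-ε1) * |y| ^ p)) := by
          apply Real.exp_le_exp.mpr; nlinarith
        nlinarith)
    (AA_int hp h1) (BB_int hp h1) i3 i4
  have e1 : (∫ x : ℝ, -Real.exp (-((ε2-ε1) * |x| ^ p))
        * Real.exp (-(ε1 * |x| ^ p) - |x| ^ (2*p-2)))
      = -AA p ε2 := by
    rw [AA]
    rw [← integral_neg]
    congr 1; funext x
    have harg : -((ε2-ε1) * |x| ^ p) + (-(ε1 * |x| ^ p) - |x| ^ (2*p-2))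
        = -(ε2 * |x| ^ p) - |x| ^ (2*p-2) := by ring
    rw [neg_mul, ← Real.exp_add, harg]
  have e2 : (∫ x : ℝ, |x| ^ (p-2) * -Real.exp (-((ε2-ε1) * |x| ^ p))
        * Real.exp (-(ε1 * |x| ^ p) - |x| ^ (2*p-2)))
      = -BB p ε2 := by
    rw [BB]
    rw [← integral_neg]
    congr 1; funext x
    rw [show |x| ^ (p-2) * -Real.exp (-((ε2-ε1) * |x| ^ p))
        * Real.exp (-(ε1 * |x| ^ p) - |x| ^ (2*p-2))
      = -(|x| ^ (p-2) * (Real.exp (-((ε2-ε1) * |x| ^ p))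
        * Real.exp (-(ε1 * |x| ^ p) - |x| ^ (2*p-2)))) from by ring]
    rw [← Real.exp_add]
    congr 2
    ring
  rw [e1, e2] at key
  have hA1 : BB p ε1 * -AA p ε2 ≤ -BB p ε2 * AA p ε1 := by
    calc BB p ε1 * -AA p ε2 = (∫ x : ℝ, |x| ^ (p-2)
          * Real.exp (-(ε1 * |x| ^ p) - |x| ^ (2*p-2))) * -AA p ε2 := by rw [BB]
      _ ≤ -BB p ε2 * (∫ x : ℝ, Real.exp (-(ε1 * |x| ^ p) - |x| ^ (2*p-2))) := key
      _ = -BB p ε2 * AA p ε1 := by rw [AA]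
  nlinarith [hA1]

end chebapp

section gprops
variable {p : ℝ}

lemma g_scaled (hp : 1 < p) {θ : ℝ} (hθ : 0 < θ) :
    θ * JJ p θ / II p θ
      = θ ^ (p/(2*p-2)) * (BB p (θ ^ (-(p/(2*p-2)))) / AA p (θ ^ (-(p/(2*p-2))))) := by
  have hεnn : (0:ℝ) ≤ θ ^ (-(p/(2*p-2))) := (rpow_pos_of_pos hθ _).le
  have hr : (0:ℝ) < θ ^ (-(1/(2*p-2))) := rpow_pos_of_pos hθ _
  have hA : 0 < AA p (θ ^ (-(p/(2*p-2)))) := AA_pos hp hεnn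
  rw [II_scale hp hθ, JJ_scale hp hθ]
  have hrp : (θ ^ (-(1/(2*p-2)))) ^ (p-1) = (θ ^ (-(1/(2*p-2)))) ^ (p-2) * θ ^ (-(1/(2*p-2))) := by
    have e1 : (p-1) = (p-2) + 1 := by ring
    rw [e1, Real.rpow_add hr, Real.rpow_one]
  have hr2 : θ * (θ ^ (-(1/(2*p-2)))) ^ (p-2) = θ ^ (p/(2*p-2)) := by
    rw [← Real.rpow_mul hθ.le]
    nth_rw 1 [← Real.rpow_one θ]
    rw [← Real.rpow_add hθ]
    congr 1
    have hne : (2*p-2) ≠ 0 := by nlinarith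
    have hne' : p - 1 ≠ 0 := by linarith
    field_simp
    ring
  rw [hrp, ← hr2]
  have halg : ∀ (R2 R B A t : ℝ), R ≠ 0 → A ≠ 0 →
      t * (R2 * R * B) / (R * A) = (t * R2) * (B / A) := by
    intro R2 R B A t hR hA
    field_simp
  exact halg _ _ _ _ _ hr.ne' hA.ne'

lemma g_mono (hp : 1 < p) {θ1 θ2 : ℝ} (h1 : 0 < θ1) (h12 : θ1 < θ2) :
    θ1 * JJ p θ1 / II p θ1 < θ2 * JJ p θ2 / II p θ2 := by
  have h2 : 0 < θ2 := h1.trans h12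
  rcases le_total p 2 with hple | hpge
  · have key := JI_mono_ple2 hp hple h1 h12.le
    have hI1 : 0 < II p θ1 := II_pos hp h1.le
    have hI2 : 0 < II p θ2 := II_pos hp h2.le
    have hJ1 : 0 < JJ p θ1 := JJ_pos hp h1.le
    have hJ2 : 0 < JJ p θ2 := JJ_pos hp h2.le
    rw [div_lt_div_iff₀ hI1 hI2]
    have s1 : θ1 * (JJ p θ1 * II p θ2) < θ2 * (JJ p θ1 * II p θ2) :=
      mul_lt_mul_of_pos_right h12 (mul_pos hJ1 hI2)
    have s2 : θ2 * (JJ p θ1 * II p θ2) ≤ θ2 * (JJ p θ2 * II p θ1) :=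
      mul_le_mul_of_nonneg_left key h2.le
    nlinarith [s1, s2]
  · have hexp : (0:ℝ) < p/(2*p-2) := by
      apply div_pos (by linarith) (by linarith)
    have hεlt : θ2 ^ (-(p/(2*p-2))) < θ1 ^ (-(p/(2*p-2))) :=
      Real.rpow_lt_rpow_of_neg h1 h12 (by linarith)
    have hε2 : (0:ℝ) < θ2 ^ (-(p/(2*p-2))) := rpow_pos_of_pos h2 _
    have hslt : θ1 ^ (p/(2*p-2)) < θ2 ^ (p/(2*p-2)) :=
      Real.rpow_lt_rpow h1.le h12 hexp
    have hs1 : (0:ℝ) < θ1 ^ (p/(2*p-2)) := rpow_pos_of_pos h1 _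
    have hA1 : 0 < AA p (θ1 ^ (-(p/(2*p-2)))) := AA_pos hp (by positivity)
    have hA2 : 0 < AA p (θ2 ^ (-(p/(2*p-2)))) := AA_pos hp hε2.le
    have hB1 : 0 < BB p (θ1 ^ (-(p/(2*p-2)))) := BB_pos hp (by positivity)
    have hB2 : 0 < BB p (θ2 ^ (-(p/(2*p-2)))) := BB_pos hp hε2.le
    have key := BA_mono_pge2 hp hpge hε2.le hεlt.le
    rw [g_scaled hp h1, g_scaled hp h2]
    have hdiv : BB p (θ1 ^ (-(p/(2*p-2)))) / AA p (θ1 ^ (-(p/(2*p-2))))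
        ≤ BB p (θ2 ^ (-(p/(2*p-2)))) / AA p (θ2 ^ (-(p/(2*p-2)))) := by
      rw [div_le_div_iff₀ hA1 hA2]
      nlinarith
    have hpos1 : 0 < BB p (θ1 ^ (-(p/(2*p-2)))) / AA p (θ1 ^ (-(p/(2*p-2)))) := by positivity
    nlinarith

end gprops

section limits
variable {p : ℝ}

lemma g_zero (hp : 1 < p) :
    Tendsto (fun θ => θ * JJ p θ / II p θ) (nhdsWithin 0 (Set.Ioi 0)) (nhds 0) := by
  have hII1 : 0 < II p 1 := II_pos hp zero_le_one
  have hJJ0 : 0 < JJ p 0 := JJ_pos hp le_rfl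
  apply squeeze_zero'
  · filter_upwards [self_mem_nhdsWithin] with θ hθ
    have hθ0 : (0:ℝ) < θ := hθ
    have := JJ_pos hp hθ0.le
    have := II_pos hp hθ0.le
    positivity
  · filter_upwards [Ioc_mem_nhdsGT_of_mem (Set.mem_Ico.mpr ⟨le_rfl, zero_lt_one⟩)] with θ hθ
    obtain ⟨hθ0, hθ1⟩ := hθ
    have hJ : JJ p θ ≤ JJ p 0 := JJ_le hp le_rfl hθ0.le
    have hI : II p 1 ≤ II p θ := II_le hp hθ0.le hθ1
    calc θ * JJ p θ / II p θ ≤ θ * JJ p 0 / II p 1 := by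
          apply div_le_div₀ (by positivity) _ hII1 hI
          exact mul_le_mul_of_nonneg_left hJ hθ0.le
      _ = θ * (JJ p 0 / II p 1) := by rw [mul_div_assoc]
  · have : Tendsto (fun θ : ℝ => θ * (JJ p 0 / II p 1)) (nhds 0) (nhds 0) := by
      have := (continuous_id.mul (continuous_const
        (y := JJ p 0 / II p 1))).tendsto (0:ℝ)
      simpa [Pi.mul_def] using this
    exact this.mono_left nhdsWithin_le_nhds

lemma g_top (hp : 1 < p) :
    Tendsto (fun θ => θ * JJ p θ / II p θ) atTop atTop := by
  have hexp : (0:ℝ) < p/(2*p-2) := div_pos (by linarith) (by linarith)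
  obtain ⟨m, hm, hbound⟩ : ∃ m, 0 < m ∧ ∀ θ : ℝ, 1 ≤ θ →
      m * θ ^ (p/(2*p-2)) ≤ θ * JJ p θ / II p θ := by
    rcases le_total p 2 with hple | hpge
    · refine ⟨BB p 0 / AA p 0, div_pos (BB_pos hp le_rfl) (AA_pos hp le_rfl), fun θ hθ => ?_⟩
      have hθ0 : (0:ℝ) < θ := lt_of_lt_of_le zero_lt_one hθ
      have hε : (0:ℝ) < θ ^ (-(p/(2*p-2))) := rpow_pos_of_pos hθ0 _
      have hA0 : 0 < AA p 0 := AA_pos hp le_rfl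
      have hAε : 0 < AA p (θ ^ (-(p/(2*p-2)))) := AA_pos hp hε.le
      have key := BA_mono_ple2 hp hple le_rfl hε.le
      have hdiv : BB p 0 / AA p 0 ≤ BB p (θ ^ (-(p/(2*p-2)))) / AA p (θ ^ (-(p/(2*p-2)))) := by
        rw [div_le_div_iff₀ hA0 hAε]
        nlinarith
      rw [g_scaled hp hθ0]
      have hs : (0:ℝ) < θ ^ (p/(2*p-2)) := rpow_pos_of_pos hθ0 _
      calc BB p 0 / AA p 0 * θ ^ (p/(2*p-2))
          ≤ BB p (θ ^ (-(p/(2*p-2)))) / AA p (θ ^ (-(p/(2*p-2)))) * θ ^ (p/(2*p-2)) :=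
            mul_le_mul_of_nonneg_right hdiv hs.le
        _ = θ ^ (p/(2*p-2)) * (BB p (θ ^ (-(p/(2*p-2)))) / AA p (θ ^ (-(p/(2*p-2))))) := by ring
    · refine ⟨BB p 1 / AA p 1, div_pos (BB_pos hp zero_le_one) (AA_pos hp zero_le_one),
        fun θ hθ => ?_⟩
      have hθ0 : (0:ℝ) < θ := lt_of_lt_of_le zero_lt_one hθ
      have hε : (0:ℝ) < θ ^ (-(p/(2*p-2))) := rpow_pos_of_pos hθ0 _
      have hε1 : θ ^ (-(p/(2*p-2))) ≤ 1 :=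
        Real.rpow_le_one_of_one_le_of_nonpos hθ (by linarith)
      have hA1 : 0 < AA p 1 := AA_pos hp zero_le_one
      have hAε : 0 < AA p (θ ^ (-(p/(2*p-2)))) := AA_pos hp hε.le
      have key := BA_mono_pge2 hp hpge hε.le hε1
      have hdiv : BB p 1 / AA p 1 ≤ BB p (θ ^ (-(p/(2*p-2)))) / AA p (θ ^ (-(p/(2*p-2)))) := by
        rw [div_le_div_iff₀ hA1 hAε]
        nlinarith
      rw [g_scaled hp hθ0]
      have hs : (0:ℝ) < θ ^ (p/(2*p-2)) := rpow_pos_of_pos hθ0 _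
      calc BB p 1 / AA p 1 * θ ^ (p/(2*p-2))
          ≤ BB p (θ ^ (-(p/(2*p-2)))) / AA p (θ ^ (-(p/(2*p-2)))) * θ ^ (p/(2*p-2)) :=
            mul_le_mul_of_nonneg_right hdiv hs.le
        _ = θ ^ (p/(2*p-2)) * (BB p (θ ^ (-(p/(2*p-2)))) / AA p (θ ^ (-(p/(2*p-2))))) := by ring
  apply tendsto_atTop_mono' _ _ ((tendsto_rpow_atTop hexp).const_mul_atTop hm)
  filter_upwards [eventually_ge_atTop (1:ℝ)] with θ hθ
  exact hbound θ hθ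

lemma g_cont (hp : 1 < p) {θ0 : ℝ} (h0 : 0 < θ0) :
    ContinuousAt (fun θ => θ * JJ p θ / II p θ) θ0 := by
  exact (continuousAt_id.mul (JJ_cont hp h0)).div (II_cont hp h0) (II_pos hp h0.le).ne'

end limits

theorem g_limits_and_unique_solution (p : ℝ) (hp : 1 < p) (g : ℝ → ℝ)
    (hg : ∀ θ : ℝ, g θ =
      θ * (∫ x : ℝ, |x| ^ (p - 2) * Real.exp (-|x| ^ p - θ * |x| ^ (2 * p - 2))) /
        (∫ x : ℝ, Real.exp (-|x| ^ p - θ * |x| ^ (2 * p - 2)))) :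
    Tendsto g (nhdsWithin 0 (Set.Ioi 0)) (nhds 0) ∧
    Tendsto g atTop atTop ∧
    ∀ β ∈ Set.Ioo (0 : ℝ) 1,
      ∃! θ : ℝ, 0 < θ ∧ g θ = (1 - β) * p / (2 * (p - 1) * β) := by
  have hgf : g = fun θ => θ * JJ p θ / II p θ := by
    funext θ
    rw [hg θ, JJ, II]
  rw [hgf]
  refine ⟨g_zero hp, g_top hp, ?_⟩
  intro β hβ
  obtain ⟨hβ0, hβ1⟩ := hβ
  set c := (1 - β) * p / (2 * (p - 1) * β) with hc_def
  have hc : 0 < c := by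
    apply div_pos
    · apply mul_pos (by linarith) (by linarith)
    · apply mul_pos (by linarith) hβ0
  -- find a small point
  obtain ⟨θa, ⟨hθa_lt, hθa_pos⟩⟩ :=
    (((g_zero hp).eventually_lt_const hc).and self_mem_nhdsWithin).exists
  have hθa0 : (0:ℝ) < θa := hθa_pos
  -- find a large point
  obtain ⟨θb, ⟨hθb_gt, hθb_lt⟩⟩ :=
    (((g_top hp).eventually_gt_atTop c).and (eventually_gt_atTop θa)).exists
  have hθb0 : (0:ℝ) < θb := hθa0.trans hθb_lt
  -- IVT
  have hcont : ContinuousOn (fun θ => θ * JJ p θ / II p θ) (Set.Icc θa θb) := by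
    intro θ hθ
    exact (g_cont hp (lt_of_lt_of_le hθa0 hθ.1)).continuousWithinAt
  have hsub := intermediate_value_Icc hθb_lt.le hcont
  have hcmem : c ∈ Set.Icc (θa * JJ p θa / II p θa) (θb * JJ p θb / II p θb) :=
    ⟨hθa_lt.le, hθb_gt.le⟩
  obtain ⟨θ, hθmem, hθeq⟩ := hsub hcmem
  have hθ0 : 0 < θ := lt_of_lt_of_le hθa0 hθmem.1
  refine ⟨θ, ⟨hθ0, hθeq⟩, ?_⟩
  intro y hy
  obtain ⟨hy0, hyeq⟩ := hy
  have h1 : θ * JJ p θ / II p θ = c := hθeq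
  have h2 : y * JJ p y / II p y = c := hyeq
  by_contra hne
  rcases lt_or_gt_of_ne hne with hlt | hgt
  · have := g_mono hp hy0 hlt
    rw [h2, h1] at this
    exact lt_irrefl c this
  · have := g_mono hp hθ0 hgt
    rw [h1, h2] at this
    exact lt_irrefl c this
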